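/- arXiv:2405.03115 — 3 statements merged into one kernel-verified Lean document; each statement's English description precedes it below -/
import Mathlib

section
/- Let G be a graph, M a positive semidefinite matrix indexed by V(G) with (M)_{ij} x_i x_j ≤ 0 for nonadjacent distinct i, j, x ∈ R(M) totally nonzero, and suppose G has an independent set C such that M[C] is diagonal, (M)_{vv}/x_v² = c := max_{u∈V(G)} (M)_{uu}/x_u² for all v ∈ C, and c·x_v = Σ_{u∈C} (M)_{vu}·x_u⁻¹ for all v ∉ C. Then α(G) = |C| = (xᵀ M# x)·c. -/
open Matrix Finset

/-! Test the positive semidefinite form of `M` against `z = 𝟙_S · x⁻¹` for an independent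
set `S`: `x ⬝ᵥ z = |S|`, and the sign condition on nonadjacent pairs together with the maximality
of `c` gives `z ⬝ᵥ M z ≤ c |S|`. Writing `x = M y`, Cauchy–Schwarz yields
`|S|² = (y ⬝ᵥ M z)² ≤ (y ⬝ᵥ M y) c |S|`, so `|S| ≤ c (y ⬝ᵥ M y)`. For `S = C` the hypotheses
say exactly `M z = c x`, which makes this an equality, and `y ⬝ᵥ M y = x ⬝ᵥ M# x` since
`M M# M = M`. -/

/-- The independence number of a finite simple graph. -/
noncomputable def indepNum {V : Type*} [Fintype V] (G : SimpleGraph V) : ℕ :=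
  sSup {k | ∃ S : Finset V, (∀ u ∈ S, ∀ v ∈ S, u ≠ v → ¬ G.Adj u v) ∧ S.card = k}

section

variable {ι : Type*} [Fintype ι]

theorem Matrix.PosSemidef.dotProduct_mulVec_mul_le [DecidableEq ι] {M : Matrix ι ι ℝ}
    (hM : M.PosSemidef) (a b : ι → ℝ) :
    (a ⬝ᵥ M *ᵥ b) * (b ⬝ᵥ M *ᵥ a) ≤ (a ⬝ᵥ M *ᵥ a) * (b ⬝ᵥ M *ᵥ b) := by
  simpa only [toBilin'_apply'] using
    (toBilin' M).apply_mul_apply_le_of_forall_zero_le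
      (fun v => by simpa only [toBilin'_apply', star_trivial] using
        hM.dotProduct_mulVec_nonneg v) a b

theorem Matrix.IsSymm.mulVec_dotProduct {M : Matrix ι ι ℝ} (hM : M.IsSymm) (a b : ι → ℝ) :
    M *ᵥ a ⬝ᵥ b = a ⬝ᵥ M *ᵥ b := by
  rw [dotProduct_mulVec, ← mulVec_transpose, hM.eq, dotProduct_comm]

theorem Matrix.IsSymm.dotProduct_mulVec_mul_mul_eq_self {M X : Matrix ι ι ℝ} (hM : M.IsSymm)
    (hX : M * X * M = M) (y : ι → ℝ) :
    M *ᵥ y ⬝ᵥ X *ᵥ (M *ᵥ y) = y ⬝ᵥ M *ᵥ y := by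
  rw [hM.mulVec_dotProduct, mulVec_mulVec, mulVec_mulVec, hX]

theorem dotProduct_indicator (S : Finset ι) (v w : ι → ℝ) :
    v ⬝ᵥ (S : Set ι).indicator w = ∑ i ∈ S, v i * w i := by
  simp_rw [dotProduct, ← Set.indicator_mul_right]
  exact Finset.sum_indicator_subset _ (Finset.subset_univ S)

theorem mulVec_indicator (M : Matrix ι ι ℝ) (S : Finset ι) (w : ι → ℝ) (i : ι) :
    (M *ᵥ (S : Set ι).indicator w) i = ∑ j ∈ S, M i j * w j :=
  dotProduct_indicator S (M i) w

theorem dotProduct_indicator_inv {x : ι → ℝ} {S : Finset ι} (hx : ∀ i ∈ S, x i ≠ 0) :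
    x ⬝ᵥ (S : Set ι).indicator x⁻¹ = #S := by
  rw [dotProduct_indicator, Finset.sum_congr rfl fun i hi => by
    rw [Pi.inv_apply, mul_inv_cancel₀ (hx i hi)]]
  simp

theorem indicator_inv_dotProduct_mulVec_le {M : Matrix ι ι ℝ} {x : ι → ℝ} {S : Finset ι}
    {c : ℝ} (hx : ∀ i ∈ S, x i ≠ 0) (hdiag : ∀ i ∈ S, M i i / x i ^ 2 ≤ c)
    (hoff : ∀ i ∈ S, ∀ j ∈ S, i ≠ j → M i j * x i * x j ≤ 0) :
    (S : Set ι).indicator x⁻¹ ⬝ᵥ M *ᵥ (S : Set ι).indicator x⁻¹ ≤ c * #S := by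
  classical
  rw [dotProduct_comm, dotProduct_indicator]
  simp_rw [mulVec_indicator, Pi.inv_apply, Finset.sum_mul]
  calc _ ≤ ∑ _i ∈ S, c := Finset.sum_le_sum fun i hi => ?_
    _ = c * #S := by rw [sum_const, nsmul_eq_mul, mul_comm]
  rw [← Finset.add_sum_erase S _ hi, ← add_zero c]
  refine add_le_add ?_ (Finset.sum_nonpos fun j hj => ?_)
  · rw [mul_assoc, ← mul_inv, ← pow_two, ← div_eq_mul_inv]
    exact hdiag i hi
  · obtain ⟨hji, hj⟩ := Finset.mem_erase.mp hj
    have hterm : M i j * (x j)⁻¹ * (x i)⁻¹ = M i j * x i * x j / (x i * x j) ^ 2 := by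
      field_simp [hx i hi, hx j hj]
    rw [hterm]
    exact div_nonpos_of_nonpos_of_nonneg (hoff i hi j hj hji.symm) (sq_nonneg _)

theorem mulVec_indicator_inv_eq_smul {M : Matrix ι ι ℝ} {x : ι → ℝ} {C : Finset ι}
    {c : ℝ} (hx : ∀ i ∈ C, x i ≠ 0) (hdiag : ∀ i ∈ C, ∀ j ∈ C, i ≠ j → M i j = 0)
    (hCmax : ∀ i ∈ C, M i i / x i ^ 2 = c)
    (hout : ∀ i ∉ C, c * x i = ∑ j ∈ C, M i j * (x j)⁻¹) :
    M *ᵥ (C : Set ι).indicator x⁻¹ = c • x := by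
  ext i
  rw [mulVec_indicator, Pi.smul_apply, smul_eq_mul]
  by_cases hi : i ∈ C
  · rw [Finset.sum_eq_single_of_mem i hi
      fun j hj hji => by rw [hdiag i hi j hj hji.symm, zero_mul], ← hCmax i hi, Pi.inv_apply]
    field_simp [hx i hi]
  · exact (hout i hi).symm

theorem card_le_mul_dotProduct_mulVec [DecidableEq ι] {M : Matrix ι ι ℝ} (hM : M.PosSemidef)
    {x y : ι → ℝ} (hy : M *ᵥ y = x) {S : Finset ι} {c : ℝ} (hc : 0 ≤ c)
    (hx : ∀ i ∈ S, x i ≠ 0) (hdiag : ∀ i ∈ S, M i i / x i ^ 2 ≤ c)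
    (hoff : ∀ i ∈ S, ∀ j ∈ S, i ≠ j → M i j * x i * x j ≤ 0) :
    (#S : ℝ) ≤ c * (y ⬝ᵥ M *ᵥ y) := by
  set z := (S : Set ι).indicator x⁻¹
  have hsymm : M.IsSymm := isHermitian_iff_isSymm.mp hM.isHermitian
  have hyz : y ⬝ᵥ M *ᵥ z = #S := by
    rw [← hsymm.mulVec_dotProduct, hy, dotProduct_indicator_inv hx]
  have hzy : z ⬝ᵥ M *ᵥ y = #S := by
    rw [hy, dotProduct_comm, dotProduct_indicator_inv hx]
  have hCS := hM.dotProduct_mulVec_mul_le y z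
  rw [hyz, hzy] at hCS
  have ht : 0 ≤ y ⬝ᵥ M *ᵥ y := by simpa using hM.dotProduct_mulVec_nonneg y
  rcases (Nat.cast_nonneg (α := ℝ) #S).eq_or_lt with hS | hS
  · rw [← hS]
    exact mul_nonneg hc ht
  refine le_of_mul_le_mul_right ?_ hS
  calc (#S : ℝ) * #S ≤ (y ⬝ᵥ M *ᵥ y) * (z ⬝ᵥ M *ᵥ z) := hCS
    _ ≤ (y ⬝ᵥ M *ᵥ y) * (c * #S) :=
      mul_le_mul_of_nonneg_left (indicator_inv_dotProduct_mulVec_le hx hdiag hoff) ht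
    _ = c * (y ⬝ᵥ M *ᵥ y) * #S := by ring

theorem card_eq_mul_dotProduct_mulVec {M : Matrix ι ι ℝ} (hM : M.IsSymm) {x y : ι → ℝ}
    (hy : M *ᵥ y = x) {C : Finset ι} {c : ℝ} (hx : ∀ i ∈ C, x i ≠ 0)
    (hMC : M *ᵥ (C : Set ι).indicator x⁻¹ = c • x) :
    (#C : ℝ) = c * (y ⬝ᵥ M *ᵥ y) := by
  rw [← dotProduct_indicator_inv hx, ← hy, hM.mulVec_dotProduct, hy, hMC, dotProduct_smul,
    smul_eq_mul]

end

theorem indepNum_eq_card {V : Type*} [Fintype V] {G : SimpleGraph V} {C : Finset V}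
    (hC : ∀ u ∈ C, ∀ v ∈ C, u ≠ v → ¬ G.Adj u v)
    (hmax : ∀ S : Finset V, (∀ u ∈ S, ∀ v ∈ S, u ≠ v → ¬ G.Adj u v) → #S ≤ #C) :
    indepNum G = #C :=
  IsGreatest.csSup_eq ⟨⟨C, hC, rfl⟩, by rintro _ ⟨S, hS, rfl⟩; exact hmax S hS⟩

theorem stmt5_general (n : ℕ) (G : SimpleGraph (Fin n)) (M : Matrix (Fin n) (Fin n) ℝ)
    (hM : M.PosSemidef) (x : Fin n → ℝ)
    (hxR : ∃ y : Fin n → ℝ, M.mulVec y = x) (hx : ∀ u, x u ≠ 0)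
    (hnonadj : ∀ i j, i ≠ j → ¬ G.Adj i j → M i j * x i * x j ≤ 0)
    (X : Matrix (Fin n) (Fin n) ℝ)
    (h1 : M * X * M = M)
    (C : Finset (Fin n)) (hC : ∀ u ∈ C, ∀ v ∈ C, u ≠ v → ¬ G.Adj u v)
    (hdiag : ∀ u ∈ C, ∀ v ∈ C, u ≠ v → M u v = 0)
    (c : ℝ) (hc : c = ⨆ u : Fin n, M u u / (x u) ^ 2)
    (hCmax : ∀ v ∈ C, M v v / (x v) ^ 2 = c)
    (hout : ∀ v ∉ C, c * x v = ∑ u ∈ C, M v u * (x u)⁻¹) :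
    (indepNum G : ℝ) = C.card ∧ (C.card : ℝ) = (x ⬝ᵥ X.mulVec x) * c := by
  obtain ⟨y, hy⟩ := hxR
  have hsymm : M.IsSymm := isHermitian_iff_isSymm.mp hM.isHermitian
  have hc0 : 0 ≤ c := hc ▸ Real.iSup_nonneg fun u => div_nonneg hM.diag_nonneg (sq_nonneg _)
  have hcmax : ∀ u, M u u / x u ^ 2 ≤ c := fun u =>
    hc ▸ le_ciSup (f := fun u => M u u / x u ^ 2) (Set.finite_range _).bddAbove u
  have hCcard : (#C : ℝ) = c * (y ⬝ᵥ M *ᵥ y) := card_eq_mul_dotProduct_mulVec hsymm hy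
    (fun u _ => hx u) (mulVec_indicator_inv_eq_smul (fun u _ => hx u) hdiag hCmax hout)
  refine ⟨?_, ?_⟩
  · rw [indepNum_eq_card hC fun S hS => ?_]
    have hSle := card_le_mul_dotProduct_mulVec (S := S) hM hy hc0 (fun u _ => hx u)
      (fun u _ => hcmax u) fun u hu v hv huv => hnonadj u v huv (hS u hu v hv huv)
    exact_mod_cast hCcard ▸ hSle
  · rw [← hy, hsymm.dotProduct_mulVec_mul_mul_eq_self h1, hCcard, mul_comm]

/-- Theorem 3.1(2), sufficiency of the equality condition: if an independent set C
satisfies the stated conditions, then α(G) = |C| = (xᵀ M# x)·c. -/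
theorem stmt5 (n : ℕ) (G : SimpleGraph (Fin n)) (M : Matrix (Fin n) (Fin n) ℝ)
    (hM : M.PosSemidef) (x : Fin n → ℝ)
    (hxR : ∃ y : Fin n → ℝ, M.mulVec y = x) (hx : ∀ u, x u ≠ 0)
    (hnonadj : ∀ i j, i ≠ j → ¬ G.Adj i j → M i j * x i * x j ≤ 0)
    (X : Matrix (Fin n) (Fin n) ℝ)
    (h1 : M * X * M = M) (h2 : X * M * X = X) (h3 : M * X = X * M)
    (C : Finset (Fin n)) (hC : ∀ u ∈ C, ∀ v ∈ C, u ≠ v → ¬ G.Adj u v)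
    (hdiag : ∀ u ∈ C, ∀ v ∈ C, u ≠ v → M u v = 0)
    (c : ℝ) (hc : c = ⨆ u : Fin n, M u u / (x u) ^ 2)
    (hCmax : ∀ v ∈ C, M v v / (x v) ^ 2 = c)
    (hout : ∀ v ∉ C, c * x v = ∑ u ∈ C, M v u * (x u)⁻¹) :
    (indepNum G : ℝ) = C.card ∧ (C.card : ℝ) = (x ⬝ᵥ X.mulVec x) * c :=
  stmt5_general n G M hM x hxR hx hnonadj X h1 C hC hdiag c hc hCmax hout
end

section
/- Let G be a graph and M a positive definite matrix indexed by V(G) with (M)_{ij} = 0 whenever i, j are nonadjacent distinct vertices. Then for every vector x with all entries nonzero, α(G) ≤ (xᵀ M⁻¹ x) · max_{u∈V(G)} (M)_{uu}/x_u². -/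
open Matrix Finset

/-!
Take a maximum independent set `S`. The principal submatrix of `M` on `S` is diagonal, so the
vector `y` supported on `S` with `y_u = x_u / M_uu` satisfies `(M y)_u = x_u` on `S`, whence
`yᵀ M y = yᵀ x = ∑_{u ∈ S} x_u² / M_uu`. Cauchy–Schwarz for the inner product given by `M`,
`(yᵀ x)² = (yᵀ M (M⁻¹ x))² ≤ (yᵀ M y)(xᵀ M⁻¹ x)`, bounds this sum by `xᵀ M⁻¹ x`, and each of its
`α(G)` terms is at least `(max_u M_uu / x_u²)⁻¹`.
-/

theorem exists_indep_card_eq_indepNum {V : Type*} [Fintype V] (G : SimpleGraph V) :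
    ∃ S : Finset V, (∀ u ∈ S, ∀ v ∈ S, u ≠ v → ¬ G.Adj u v) ∧ S.card = indepNum G := by
  refine Nat.sSup_mem
    (s := {k | ∃ S : Finset V, (∀ u ∈ S, ∀ v ∈ S, u ≠ v → ¬ G.Adj u v) ∧ S.card = k})
    ⟨0, ∅, by simp⟩ ⟨Fintype.card V, ?_⟩
  rintro k ⟨S, -, rfl⟩
  exact S.card_le_univ

namespace Matrix

variable {n : Type*} [Fintype n]

theorem PosSemidef.dotProduct_mulVec_sq_le {M : Matrix n n ℝ} (hM : M.PosSemidef) (a b : n → ℝ) :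
    (a ⬝ᵥ M *ᵥ b) ^ 2 ≤ (a ⬝ᵥ M *ᵥ a) * (b ⬝ᵥ M *ᵥ b) := by
  let := M.toSeminormedAddCommGroup hM
  let := M.toInnerProductSpace hM
  have := real_inner_mul_inner_self_le a b
  change (M *ᵥ b) ⬝ᵥ star a * ((M *ᵥ b) ⬝ᵥ star a)
    ≤ (M *ᵥ a) ⬝ᵥ star a * ((M *ᵥ b) ⬝ᵥ star b) at this
  simpa only [star_trivial, dotProduct_comm (M *ᵥ _), sq] using this

variable [DecidableEq n]

theorem PosDef.dotProduct_sq_le_mul_inv {M : Matrix n n ℝ} (hM : M.PosDef) (x y : n → ℝ) :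
    (y ⬝ᵥ x) ^ 2 ≤ (y ⬝ᵥ M *ᵥ y) * (x ⬝ᵥ M⁻¹ *ᵥ x) := by
  set z := M⁻¹ *ᵥ x
  have hMz : M *ᵥ z = x := by
    rw [mulVec_mulVec, mul_nonsing_inv _ ((isUnit_iff_isUnit_det _).1 hM.isUnit), one_mulVec]
  have hQ : x ⬝ᵥ z = z ⬝ᵥ M *ᵥ z := by rw [hMz, dotProduct_comm]
  rw [hQ, ← hMz]
  exact hM.posSemidef.dotProduct_mulVec_sq_le y z

theorem PosDef.sum_sq_div_diag_le_dotProduct_inv_mulVec {M : Matrix n n ℝ} (hM : M.PosDef)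
    {S : Finset n} (hS : ∀ u ∈ S, ∀ v ∈ S, u ≠ v → M u v = 0) (x : n → ℝ) :
    ∑ u ∈ S, x u ^ 2 / M u u ≤ x ⬝ᵥ M⁻¹ *ᵥ x := by
  set y : n → ℝ := fun u => if u ∈ S then x u / M u u else 0
  set t := ∑ u ∈ S, x u ^ 2 / M u u
  have hdot (w : n → ℝ) : y ⬝ᵥ w = ∑ u ∈ S, x u / M u u * w u := by
    simp only [dotProduct, y, ite_mul, zero_mul, sum_ite_mem, univ_inter]
  have hMy (u : n) (hu : u ∈ S) : (M *ᵥ y) u = x u := by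
    rw [mulVec, dotProduct, sum_eq_single u]
    · simp only [y, if_pos hu]
      exact mul_div_cancel₀ (x u) hM.diag_pos.ne'
    · intro v _ hvu
      by_cases hv : v ∈ S
      · simp [hS u hu v hv (Ne.symm hvu)]
      · simp [y, hv]
    · simp
  have hyx : y ⬝ᵥ x = t := by
    rw [hdot]
    exact sum_congr rfl fun u _ => by ring
  have hyMy : y ⬝ᵥ M *ᵥ y = t := by
    rw [hdot]
    exact sum_congr rfl fun u hu => by rw [hMy u hu]; ring
  have ht : 0 ≤ t := sum_nonneg fun u _ => div_nonneg (sq_nonneg _) hM.diag_pos.le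
  have hQ : 0 ≤ x ⬝ᵥ M⁻¹ *ᵥ x := by
    simpa using hM.inv.posSemidef.dotProduct_mulVec_nonneg x
  have hCS := hM.dotProduct_sq_le_mul_inv x y
  rw [hyx, hyMy] at hCS
  nlinarith

end Matrix

theorem Finset.card_le_mul_sum_sq_div {ι : Type*} (S : Finset ι) {d x : ι → ℝ}
    (hd : ∀ u ∈ S, 0 < d u) (hx : ∀ u ∈ S, x u ≠ 0) {c : ℝ} (hc : ∀ u ∈ S, d u / x u ^ 2 ≤ c) :
    (S.card : ℝ) ≤ c * ∑ u ∈ S, x u ^ 2 / d u := by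
  rw [card_eq_sum_ones, Nat.cast_sum, Nat.cast_one, mul_sum]
  refine sum_le_sum fun u hu => ?_
  have hxu : 0 < x u ^ 2 := by have := hx u hu; positivity
  calc (1 : ℝ) = d u / x u ^ 2 * (x u ^ 2 / d u) := by
        rw [div_mul_div_comm, mul_comm (d u), div_self (mul_pos hxu (hd u hu)).ne']
    _ ≤ c * (x u ^ 2 / d u) := by gcongr; exacts [(div_pos hxu (hd u hu)).le, hc u hu]

/-- Remark 3.2: if M is positive definite with M_{ij} = 0 for nonadjacent distinct i,j,
then α(G) ≤ (xᵀ M⁻¹ x) · max_u M_{uu}/x_u² for every totally nonzero x. -/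
theorem stmt6 (n : ℕ) (G : SimpleGraph (Fin n)) (M : Matrix (Fin n) (Fin n) ℝ)
    (hM : M.PosDef)
    (hnonadj : ∀ i j : Fin n, i ≠ j → ¬ G.Adj i j → M i j = 0)
    (x : Fin n → ℝ) (hx : ∀ u, x u ≠ 0) :
    (indepNum G : ℝ) ≤ (x ⬝ᵥ M⁻¹.mulVec x) * ⨆ u : Fin n, M u u / (x u) ^ 2 := by
  obtain ⟨S, hS, hS_card⟩ := exists_indep_card_eq_indepNum G
  have hMS : ∀ u ∈ S, ∀ v ∈ S, u ≠ v → M u v = 0 :=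
    fun u hu v hv huv => hnonadj u v huv (hS u hu v hv huv)
  have hc : 0 ≤ ⨆ u : Fin n, M u u / x u ^ 2 :=
    Real.iSup_nonneg fun u => div_nonneg hM.diag_pos.le (sq_nonneg _)
  rw [← hS_card, mul_comm]
  calc (S.card : ℝ)
      ≤ (⨆ u : Fin n, M u u / x u ^ 2) * ∑ u ∈ S, x u ^ 2 / M u u :=
        S.card_le_mul_sum_sq_div (fun _ _ => hM.diag_pos) (fun u _ => hx u)
          (fun u _ => le_ciSup (f := fun u => M u u / x u ^ 2) (Set.finite_range _).bddAbove u)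
    _ ≤ (⨆ u : Fin n, M u u / x u ^ 2) * (x ⬝ᵥ M⁻¹ *ᵥ x) :=
        mul_le_mul_of_nonneg_left (hM.sum_sq_div_diag_le_dotProduct_inv_mulVec hMS x) hc
end

section
/- Let G be an n-vertex graph with largest Laplacian eigenvalue μ > 0 and minimum degree δ. Then α(G) ≤ n(μ − δ)/μ. -/
open scoped Classical
open Matrix Finset

/-!
For an independent set `S` with `α` vertices in a graph on `n` vertices, test the Laplacian on
`x = n • 𝟙_S - α • 𝟙`. Constants lie in the kernel of `L`, so `xᵀ L x = n² · 𝟙_Sᵀ L 𝟙_S`, and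
since `S` spans no edge this is `n² ∑_{v ∈ S} deg v ≥ n² α δ`. On the other hand
`‖x‖² = n α (n - α)`, and `xᵀ L x ≤ μ ‖x‖²` because `μ • 1 - L` is positive semidefinite.
Hence `n δ ≤ μ (n - α)`, which is the claim.
-/

open scoped MatrixOrder

theorem Matrix.IsHermitian.dotProduct_mulVec_le_of_forall_eigenvalue_le {ι : Type*} [Fintype ι]
    [DecidableEq ι] {A : Matrix ι ι ℝ} (hA : A.IsHermitian) {μ : ℝ}
    (hμ : ∀ (ν : ℝ) (v : ι → ℝ), v ≠ 0 → A *ᵥ v = ν • v → ν ≤ μ) (x : ι → ℝ) :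
    x ⬝ᵥ (A *ᵥ x) ≤ μ * (x ⬝ᵥ x) := by
  have hle : A ≤ algebraMap ℝ _ μ := by
    refine le_algebraMap_of_spectrum_le (ha := hA) fun ν hν => ?_
    rw [← Matrix.spectrum_toLin', ← Module.End.hasEigenvalue_iff_mem_spectrum] at hν
    obtain ⟨v, hv⟩ := hν.exists_hasEigenvector
    exact hμ ν v hv.2 (by simpa using hv.apply_eq_smul)
  simpa [Algebra.algebraMap_eq_smul_one, sub_mulVec, dotProduct_sub, smul_mulVec] using
    (Matrix.le_iff.mp hle).dotProduct_mulVec_nonneg x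

theorem indepNum_eq_simpleGraph_indepNum {V : Type*} [Fintype V] (G : SimpleGraph V) :
    indepNum G = G.indepNum := by
  simp only [indepNum, SimpleGraph.indepNum, SimpleGraph.isNIndepSet_iff]
  congr! 4

namespace SimpleGraph

variable {V : Type*} [Fintype V] [DecidableEq V] (G : SimpleGraph V) [DecidableRel G.Adj]

theorem dotProduct_lapMatrix_mulVec_add_const (x : V → ℝ) (c : ℝ) :
    (x + fun _ ↦ c) ⬝ᵥ (G.lapMatrix ℝ *ᵥ (x + fun _ ↦ c)) = x ⬝ᵥ (G.lapMatrix ℝ *ᵥ x) := by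
  simp only [← toLinearMap₂'_apply', lapMatrix_toLinearMap₂', Pi.add_apply,
    add_sub_add_right_eq_sub]

theorem IsIndepSet.dotProduct_lapMatrix_mulVec_indicator {s : Finset V}
    (hs : G.IsIndepSet s) :
    (fun v ↦ if v ∈ s then (1 : ℝ) else 0) ⬝ᵥ (G.lapMatrix ℝ *ᵥ fun v ↦ if v ∈ s then 1 else 0)
      = ∑ v ∈ s, (G.degree v : ℝ) := by
  have hadj : ∀ u ∈ s, ∀ v ∈ s, ¬ G.Adj u v := fun u hu v hv huv ↦
    hs (mem_coe.2 hu) (mem_coe.2 hv) huv.ne huv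
  rw [lapMatrix, sub_mulVec, dotProduct_sub, dotProduct_mulVec_degMatrix,
    dotProduct_mulVec_adjMatrix]
  simp only [mul_ite, mul_one, mul_zero, sum_ite_mem, univ_inter]
  rw [inter_self, sub_eq_self]
  refine sum_eq_zero fun u _ ↦ sum_eq_zero fun v _ ↦ ?_
  split_ifs with huv hv hu
  · exact absurd huv (hadj u hu v hv)
  all_goals rfl

theorem IsIndepSet.sq_card_mul_sum_degree_le {s : Finset V} (hs : G.IsIndepSet s) {μ : ℝ}
    (hμ : ∀ (ν : ℝ) (v : V → ℝ), v ≠ 0 → G.lapMatrix ℝ *ᵥ v = ν • v → ν ≤ μ) :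
    (Fintype.card V : ℝ) ^ 2 * ∑ v ∈ s, (G.degree v : ℝ)
      ≤ μ * (#s * (Fintype.card V - #s) * Fintype.card V) := by
  set n : ℝ := (Fintype.card V : ℝ)
  set α : ℝ := (#s : ℝ)
  set y : V → ℝ := fun v ↦ if v ∈ s then 1 else 0
  set x : V → ℝ := n • y + fun _ ↦ -α
  have hform : x ⬝ᵥ (G.lapMatrix ℝ *ᵥ x) = n ^ 2 * ∑ v ∈ s, (G.degree v : ℝ) := by
    rw [dotProduct_lapMatrix_mulVec_add_const, mulVec_smul, dotProduct_smul, smul_dotProduct,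
      hs.dotProduct_lapMatrix_mulVec_indicator, smul_eq_mul, smul_eq_mul, sq, mul_assoc]
  have hnorm : x ⬝ᵥ x = α * (n - α) * n := by
    have hpt : ∀ v, x v * x v = y v * ((n - α) ^ 2 - α ^ 2) + α ^ 2 := by
      intro v
      by_cases hv : v ∈ s <;> simp [x, y, hv] <;> ring
    simp only [dotProduct, hpt, sum_add_distrib, ← sum_mul, y, sum_boole, filter_mem_eq_inter,
      univ_inter, sum_const, card_univ, nsmul_eq_mul]
    ring
  rw [← hform, ← hnorm]
  exact (G.isHermitian_lapMatrix ℝ).dotProduct_mulVec_le_of_forall_eigenvalue_le hμ x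

theorem IsIndepSet.card_le_of_lapMatrix_eigenvalue_le {s : Finset V} (hs : G.IsIndepSet s)
    (hne : s.Nonempty) {μ : ℝ} (hμpos : 0 < μ)
    (hμ : ∀ (ν : ℝ) (v : V → ℝ), v ≠ 0 → G.lapMatrix ℝ *ᵥ v = ν • v → ν ≤ μ) :
    (#s : ℝ) ≤ Fintype.card V * (μ - G.minDegree) / μ := by
  have hα : (0 : ℝ) < #s := by exact_mod_cast hne.card_pos
  have hn : (0 : ℝ) < Fintype.card V := by
    have : Nonempty V := ⟨hne.choose⟩
    exact_mod_cast Fintype.card_pos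
  set n : ℝ := (Fintype.card V : ℝ)
  set α : ℝ := (#s : ℝ)
  have hdeg : α * G.minDegree ≤ ∑ v ∈ s, (G.degree v : ℝ) := by
    rw [← nsmul_eq_mul]
    exact card_nsmul_le_sum _ _ _ fun v _ ↦ by exact_mod_cast G.minDegree_le_degree v
  have hscaled : (n * α) * (n * G.minDegree) ≤ (n * α) * (μ * (n - α)) :=
    calc (n * α) * (n * G.minDegree) = n ^ 2 * (α * G.minDegree) := by ring
      _ ≤ n ^ 2 * ∑ v ∈ s, (G.degree v : ℝ) := by gcongr
      _ ≤ μ * (α * (n - α) * n) := hs.sq_card_mul_sum_degree_le G hμ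
      _ = (n * α) * (μ * (n - α)) := by ring
  have := le_of_mul_le_mul_left hscaled (by positivity)
  rw [le_div_iff₀ hμpos]
  linarith

end SimpleGraph

theorem stmt12_general (n : ℕ) (G : SimpleGraph (Fin n)) (μ : ℝ) (hμpos : 0 < μ)
    (hμmax : ∀ (ν : ℝ) (v : Fin n → ℝ), v ≠ 0 → (G.lapMatrix ℝ).mulVec v = ν • v → ν ≤ μ) :
    (indepNum G : ℝ) ≤ n * (μ - G.minDegree) / μ := by
  obtain ⟨s, hs⟩ := G.exists_isNIndepSet_indepNum
  rw [indepNum_eq_simpleGraph_indepNum, ← hs.card_eq]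
  rcases Nat.eq_zero_or_pos n with rfl | hn
  · simp [Subsingleton.elim s ∅]
  have hne : s.Nonempty := by
    rw [← card_pos, hs.card_eq]
    have hsingleton : G.IsIndepSet ({⟨0, hn⟩} : Finset (Fin n)) := by simp
    simpa [Nat.one_le_iff_ne_zero, Nat.pos_iff_ne_zero] using hsingleton.card_le_indepNum
  simpa using hs.isIndepSet.card_le_of_lapMatrix_eigenvalue_le G hne hμpos hμmax

/-- Corollary 6.3: for an n-vertex graph with largest Laplacian eigenvalue μ > 0 and
minimum degree δ, α(G) ≤ n(μ − δ)/μ. -/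
theorem stmt12 (n : ℕ) (G : SimpleGraph (Fin n)) (μ : ℝ) (hμpos : 0 < μ)
    (hμev : ∃ v : Fin n → ℝ, v ≠ 0 ∧ (G.lapMatrix ℝ).mulVec v = μ • v)
    (hμmax : ∀ (ν : ℝ) (v : Fin n → ℝ), v ≠ 0 → (G.lapMatrix ℝ).mulVec v = ν • v → ν ≤ μ) :
    (indepNum G : ℝ) ≤ n * (μ - G.minDegree) / μ :=
  stmt12_general n G μ hμpos hμmax
end
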